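/- arXiv:math/0611405 — 7 statements merged into one kernel-verified Lean document; each statement's English description precedes it below -/
import Mathlib

section
/- Let p be a prime and let 1 ≤ e₁ ≤ e₂, 0 ≤ s₁ < e₁, 0 ≤ s₂ < e₂ be integers. If the pointed group (ℤ/p^{e₁} ⊕ ℤ/p^{e₂}, (p^{s₁}, p^{s₂})) is weakly rigid, then 0 < s₂ - s₁ < e₂ - e₁. -/
/-- Let `p` be a prime, `1 ≤ e₁ ≤ e₂`, `0 ≤ s₁ < e₁`, `0 ≤ s₂ < e₂`. If the pointed
group `(ℤ/p^{e₁} ⊕ ℤ/p^{e₂}, (p^{s₁}, p^{s₂}))` is weakly rigid, then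
`0 < s₂ - s₁ < e₂ - e₁`. -/
theorem stmt4 (p : ℕ) (hp : p.Prime) (e₁ e₂ s₁ s₂ : ℕ)
    (he₁ : 1 ≤ e₁) (he : e₁ ≤ e₂) (hs₁ : s₁ < e₁) (hs₂ : s₂ < e₂)
    (hw : ∀ f : ZMod (p ^ e₁) × ZMod (p ^ e₂) →+ ZMod (p ^ e₁) × ZMod (p ^ e₂),
      f ((p : ZMod (p ^ e₁)) ^ s₁, (p : ZMod (p ^ e₂)) ^ s₂) =
        ((p : ZMod (p ^ e₁)) ^ s₁, (p : ZMod (p ^ e₂)) ^ s₂) → Function.Bijective f) :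
    s₁ < s₂ ∧ s₂ - s₁ < e₂ - e₁ := by
  have hp1 : 1 < p := hp.one_lt
  haveI : Fact (1 < p ^ e₁) := ⟨Nat.one_lt_pow (by omega) hp1⟩
  haveI : Fact (1 < p ^ e₂) := ⟨Nat.one_lt_pow (by omega) hp1⟩
  have key : ∀ a b c : ℕ, a + c = b → (p : ZMod (p ^ e₂)) ^ a * (p : ZMod (p ^ e₂)) ^ c
      = (p : ZMod (p ^ e₂)) ^ b := by
    intro a b c h; rw [← pow_add, h]
  have key₁ : ∀ a b c : ℕ, a + c = b → (p : ZMod (p ^ e₁)) ^ a * (p : ZMod (p ^ e₁)) ^ c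
      = (p : ZMod (p ^ e₁)) ^ b := by
    intro a b c h; rw [← pow_add, h]
  have h1 : s₁ < s₂ := by
    by_contra h
    push_neg at h
    -- φ : ZMod (p^e₂) →+ ZMod (p^e₁), y ↦ y • p^(s₁-s₂)
    set c : ZMod (p ^ e₁) := (p : ZMod (p ^ e₁)) ^ (s₁ - s₂) with hc
    have hker : (zmultiplesHom (ZMod (p ^ e₁)) c) ((p ^ e₂ : ℕ) : ℤ) = 0 := by
      have h0 : (p : ZMod (p ^ e₁)) ^ e₂ = 0 := by
        have := (ZMod.natCast_eq_zero_iff (p ^ e₂) (p ^ e₁)).mpr (pow_dvd_pow p he)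
        push_cast at this; exact this
      simp only [zmultiplesHom_apply, zsmul_eq_mul]
      push_cast
      rw [h0, zero_mul]
    set φ : ZMod (p ^ e₂) →+ ZMod (p ^ e₁) :=
      ZMod.lift (p ^ e₂) ⟨zmultiplesHom (ZMod (p ^ e₁)) c, hker⟩ with hφ
    have hφval : φ ((p : ZMod (p ^ e₂)) ^ s₂) = (p : ZMod (p ^ e₁)) ^ s₁ := by
      have : ((p : ZMod (p ^ e₂)) ^ s₂) = (((p ^ s₂ : ℕ) : ℤ) : ZMod (p ^ e₂)) := by push_cast; ring
      rw [this, hφ, ZMod.lift_coe]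
      simp only [zmultiplesHom_apply, zsmul_eq_mul]
      push_cast
      rw [hc]
      exact key₁ s₂ s₁ (s₁ - s₂) (by omega)
    set f : ZMod (p ^ e₁) × ZMod (p ^ e₂) →+ ZMod (p ^ e₁) × ZMod (p ^ e₂) :=
      (φ.comp (AddMonoidHom.snd _ _)).prod (AddMonoidHom.snd _ _) with hf
    have hfix : f ((p : ZMod (p ^ e₁)) ^ s₁, (p : ZMod (p ^ e₂)) ^ s₂) =
        ((p : ZMod (p ^ e₁)) ^ s₁, (p : ZMod (p ^ e₂)) ^ s₂) := by
      simp [hf, hφval]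
    have hinj := (hw f hfix).1
    have : ((1, 0) : ZMod (p ^ e₁) × ZMod (p ^ e₂)) = (0, 0) := by
      apply hinj
      simp [hf]
    exact one_ne_zero (congrArg Prod.fst this)
  refine ⟨h1, ?_⟩
  by_contra h
  push_neg at h
  -- ψ : ZMod (p^e₁) →+ ZMod (p^e₂), x ↦ x • p^(s₂-s₁)
  set c : ZMod (p ^ e₂) := (p : ZMod (p ^ e₂)) ^ (s₂ - s₁) with hc
  have hker : (zmultiplesHom (ZMod (p ^ e₂)) c) ((p ^ e₁ : ℕ) : ℤ) = 0 := by
    have h0 : (p : ZMod (p ^ e₂)) ^ (e₁ + (s₂ - s₁)) = 0 := by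
      have := (ZMod.natCast_eq_zero_iff (p ^ (e₁ + (s₂ - s₁))) (p ^ e₂)).mpr
        (pow_dvd_pow p (by omega))
      push_cast at this; exact this
    simp only [zmultiplesHom_apply, zsmul_eq_mul]
    push_cast
    rw [hc, key e₁ (e₁ + (s₂ - s₁)) (s₂ - s₁) rfl, h0]
  set ψ : ZMod (p ^ e₁) →+ ZMod (p ^ e₂) :=
    ZMod.lift (p ^ e₁) ⟨zmultiplesHom (ZMod (p ^ e₂)) c, hker⟩ with hψ
  have hψval : ψ ((p : ZMod (p ^ e₁)) ^ s₁) = (p : ZMod (p ^ e₂)) ^ s₂ := by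
    have : ((p : ZMod (p ^ e₁)) ^ s₁) = (((p ^ s₁ : ℕ) : ℤ) : ZMod (p ^ e₁)) := by push_cast; ring
    rw [this, hψ, ZMod.lift_coe]
    simp only [zmultiplesHom_apply, zsmul_eq_mul]
    push_cast
    rw [hc]
    exact key s₁ s₂ (s₂ - s₁) (by omega)
  set f : ZMod (p ^ e₁) × ZMod (p ^ e₂) →+ ZMod (p ^ e₁) × ZMod (p ^ e₂) :=
    (AddMonoidHom.fst _ _).prod (ψ.comp (AddMonoidHom.fst _ _)) with hf
  have hfix : f ((p : ZMod (p ^ e₁)) ^ s₁, (p : ZMod (p ^ e₂)) ^ s₂) =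
      ((p : ZMod (p ^ e₁)) ^ s₁, (p : ZMod (p ^ e₂)) ^ s₂) := by
    simp [hf, hψval]
  have hinj := (hw f hfix).1
  have : ((0, 1) : ZMod (p ^ e₁) × ZMod (p ^ e₂)) = (0, 0) := by
    apply hinj
    simp [hf]
  exact one_ne_zero (congrArg Prod.snd this)
end

section
/- Let p be a prime and let k ≥ 1 and 0 ≤ s < e be integers. If the pointed group (ℤ ⊕ ℤ/p^e, (k, p^s)) is weakly rigid, then p^{s+1} divides k. -/
/-!
If `p^(s+1) ∤ k`, then `gcd(k, p^e)` is a power of `p` dividing `p^s`, so by Bézout `p^s` is a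
multiple `k • c` in `ℤ/p^e`. The endomorphism `(x, y) ↦ (x, x • c)` of `ℤ ⊕ ℤ/p^e` then fixes
`(k, p^s)` but kills `(0, 1)`, so it is not an automorphism.
-/

theorem ZMod.exists_intCast_mul_eq_of_gcd_dvd {n : ℕ} {k m : ℤ} (h : (Int.gcd k n : ℤ) ∣ m) :
    ∃ c : ZMod n, (k : ZMod n) * c = m := by
  obtain ⟨r, rfl⟩ := h
  refine ⟨(k.gcdA n * r : ℤ), ?_⟩
  rw [Int.gcd_eq_gcd_ab k n]
  push_cast
  rw [ZMod.natCast_self]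
  ring

theorem Int.gcd_prime_pow_dvd_of_not_dvd {p : ℕ} (hp : p.Prime) {k : ℤ} {s : ℕ} (e : ℕ)
    (h : ¬ (p : ℤ) ^ (s + 1) ∣ k) : (Int.gcd k (p ^ e : ℕ) : ℤ) ∣ (p : ℤ) ^ s := by
  have hdvd_pe : Int.gcd k (p ^ e : ℕ) ∣ p ^ e := by
    simpa using Int.gcd_dvd_natAbs_right k (p ^ e : ℕ)
  obtain ⟨t, -, ht⟩ := (Nat.dvd_prime_pow hp).mp hdvd_pe
  have hdvd_k : (p : ℤ) ^ t ∣ k := by exact_mod_cast ht ▸ Int.gcd_dvd_left k ((p ^ e : ℕ) : ℤ)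
  have hts : t ≤ s := by
    by_contra! hst
    exact h ((pow_dvd_pow _ hst).trans hdvd_k)
  rw [ht]
  push_cast
  exact pow_dvd_pow _ hts

theorem exists_addMonoidHom_int_prod_fix_not_injective {A : Type*} [AddCommGroup A] [Nontrivial A]
    (k : ℤ) (c : A) :
    ∃ f : ℤ × A →+ ℤ × A, f (k, k • c) = (k, k • c) ∧ ¬ Function.Injective f := by
  let f : ℤ × A →+ ℤ × A :=
    (AddMonoidHom.fst ℤ A).prod ((zmultiplesHom A c).comp (AddMonoidHom.fst ℤ A))
  have hf : ∀ x y, f (x, y) = (x, x • c) := fun _ _ => rfl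
  obtain ⟨a, ha⟩ := exists_ne (0 : A)
  refine ⟨f, hf k _, fun hinj => ha ?_⟩
  have h0 : f (0, a) = f (0, 0) := by rw [hf, hf]
  exact congrArg Prod.snd (hinj h0)

theorem stmt5_general (p : ℕ) (hp : p.Prime) (k : ℤ) (s e : ℕ) (hse : s < e)
    (hw : ∀ f : ℤ × ZMod (p ^ e) →+ ℤ × ZMod (p ^ e),
      f (k, (p : ZMod (p ^ e)) ^ s) = (k, (p : ZMod (p ^ e)) ^ s) → Function.Bijective f) :
    (p : ℤ) ^ (s + 1) ∣ k := by
  by_contra h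
  have : Fact (1 < p ^ e) := ⟨Nat.one_lt_pow (by omega) hp.one_lt⟩
  obtain ⟨c, hc⟩ :=
    ZMod.exists_intCast_mul_eq_of_gcd_dvd (Int.gcd_prime_pow_dvd_of_not_dvd hp e h)
  obtain ⟨f, hfix, hf⟩ := exists_addMonoidHom_int_prod_fix_not_injective k c
  rw [zsmul_eq_mul, hc] at hfix
  push_cast at hfix
  exact hf (hw f hfix).1

/-- Let `p` be a prime, `k ≥ 1` and `0 ≤ s < e`. If the pointed group
`(ℤ ⊕ ℤ/p^e, (k, p^s))` is weakly rigid, then `p^(s+1)` divides `k`. -/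
theorem stmt5 (p : ℕ) (hp : p.Prime) (k : ℤ) (hk : 1 ≤ k) (s e : ℕ) (hse : s < e)
    (hw : ∀ f : ℤ × ZMod (p ^ e) →+ ℤ × ZMod (p ^ e),
      f (k, (p : ZMod (p ^ e)) ^ s) = (k, (p : ZMod (p ^ e)) ^ s) → Function.Bijective f) :
    (p : ℤ) ^ (s + 1) ∣ k :=
  stmt5_general p hp k s e hse hw
end

section
/- Let p be a prime, n ≥ 1, and let integers 0 ≤ sᵢ < eᵢ (1 ≤ i ≤ n) satisfy 0 < s_{i+1} - s_i < e_{i+1} - e_i for 1 ≤ i < n. Then the pointed group (ℤ/p^{e₁} ⊕ ⋯ ⊕ ℤ/p^{eₙ}, (p^{s₁}, …, p^{sₙ})) is weakly rigid. -/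
/-- From annihilation by `p^b` in `ZMod (p^a)`, deduce divisibility of the value. -/
lemma stmt8_aux1 {p a b : ℕ} (hp : 0 < p) (hab : b ≤ a) (x : ZMod (p ^ a))
    (hx : ((p ^ b : ℕ) : ZMod (p ^ a)) * x = 0) : p ^ (a - b) ∣ x.val := by
  haveI : NeZero (p ^ a) := ⟨pow_ne_zero _ hp.ne'⟩
  have h1 : ((p ^ b * x.val : ℕ) : ZMod (p ^ a)) = 0 := by
    rw [Nat.cast_mul, ZMod.natCast_zmod_val]
    exact hx
  rw [ZMod.natCast_eq_zero_iff] at h1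
  have h2 : p ^ b * p ^ (a - b) ∣ p ^ b * x.val := by
    rwa [← pow_add, Nat.add_sub_cancel' hab]
  exact (mul_dvd_mul_iff_left (a := p ^ b) (pow_ne_zero _ hp.ne')).mp h2

/-- The reduction to `ZMod p` vanishes iff `p` divides the value. -/
lemma stmt8_aux2 {p a : ℕ} (hp : 0 < p) (ha : a ≠ 0) (x : ZMod (p ^ a)) :
    ZMod.castHom (dvd_pow_self p ha) (ZMod p) x = 0 ↔ (p : ℕ) ∣ x.val := by
  haveI : NeZero (p ^ a) := ⟨pow_ne_zero _ hp.ne'⟩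
  rw [ZMod.castHom_apply, ← ZMod.natCast_val, ZMod.natCast_eq_zero_iff]

/-- Let `p` be a prime, `n ≥ 1`, and integers `0 ≤ sᵢ < eᵢ` with
`0 < s_{i+1} - s_i < e_{i+1} - e_i` for `1 ≤ i < n`. Then the pointed group
`(ℤ/p^{e₁} ⊕ ⋯ ⊕ ℤ/p^{eₙ}, (p^{s₁}, …, p^{sₙ}))` is weakly rigid. -/
theorem stmt8 (p n : ℕ) (hp : p.Prime) (hn : 1 ≤ n) (e s : ℕ → ℕ)
    (hse : ∀ i < n, s i < e i)
    (hgap : ∀ i, i + 1 < n → s i < s (i + 1) ∧ s (i + 1) - s i < e (i + 1) - e i) :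
    ∀ f : (∀ i : Fin n, ZMod (p ^ e i)) →+ (∀ i : Fin n, ZMod (p ^ e i)),
      f (fun i : Fin n => (p : ZMod (p ^ e i)) ^ s i) = (fun i : Fin n => (p : ZMod (p ^ e i)) ^ s i) →
      Function.Bijective f := by
  intro f hf
  classical
  have hp0 : 0 < p := hp.pos
  have he0 : ∀ i : Fin n, e i ≠ 0 := fun i => by have := hse i i.2; omega
  haveI hNZ : ∀ i : Fin n, NeZero (p ^ e i) := fun i => ⟨pow_ne_zero _ hp0.ne'⟩
  -- the chain of inequalities
  have chain : ∀ i : ℕ, i < n → ∀ j : ℕ, j < i → s j < s i ∧ s i + e j < s j + e i := by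
    intro i
    induction i with
    | zero => omega
    | succ i ih =>
      intro hi j hj
      have hg := hgap i (by omega)
      rcases Nat.lt_succ_iff_lt_or_eq.mp hj with h | h
      · have h1 := ih (by omega) j h
        omega
      · subst h; omega
  -- basis vectors
  set G := ∀ i : Fin n, ZMod (p ^ e i) with hG
  let δ : Fin n → G := fun j => Pi.single j 1
  have hδ_same : ∀ i : Fin n, δ i i = 1 := fun i => Pi.single_eq_same i 1
  have hδ_ne : ∀ j i : Fin n, j ≠ i → δ j i = 0 := fun j i h => Pi.single_eq_of_ne (Ne.symm h) 1
  -- decomposition of an arbitrary element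
  have hdec : ∀ x : G, ∑ j, (x j).val • δ j = x := by
    intro x
    funext i
    rw [Finset.sum_apply, Finset.sum_eq_single i]
    · haveI := hNZ i
      rw [Pi.smul_apply, hδ_same, nsmul_eq_mul, mul_one]
      exact ZMod.natCast_zmod_val _
    · intro j _ hj
      rw [Pi.smul_apply, hδ_ne j i hj, smul_zero]
    · intro h; exact absurd (Finset.mem_univ i) h
  -- decomposition of the distinguished point
  have hgdec : ∑ j : Fin n, (p ^ s (j : ℕ)) • δ j =
      (fun i : Fin n => (p : ZMod (p ^ e i)) ^ s i) := by
    funext i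
    rw [Finset.sum_apply, Finset.sum_eq_single i]
    · rw [Pi.smul_apply, hδ_same, nsmul_eq_mul, mul_one, Nat.cast_pow]
    · intro j _ hj
      rw [Pi.smul_apply, hδ_ne j i hj, smul_zero]
    · intro h; exact absurd (Finset.mem_univ i) h
  -- reduction maps
  let π : ∀ i : Fin n, ZMod (p ^ e i) →+* ZMod p :=
    fun i => ZMod.castHom (dvd_pow_self p (he0 i)) (ZMod p)
  have hπ : ∀ (i : Fin n) (x : ZMod (p ^ e i)), π i x = 0 ↔ (p : ℕ) ∣ x.val :=
    fun i x => stmt8_aux2 hp0 (he0 i) x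
  -- K1: below-diagonal divisibility
  have hK1 : ∀ j i : Fin n, (j : ℕ) < i → p ^ (e i - e j) ∣ (f (δ j) i).val := by
    intro j i hji
    have hee := (chain i i.2 j hji).2
    have hss := (chain i i.2 j hji).1
    have hann : (p ^ e j : ℕ) • δ j = (0 : G) := by
      funext i'
      rw [Pi.smul_apply, Pi.zero_apply]
      by_cases h : i' = j
      · subst h
        rw [hδ_same, nsmul_eq_mul, mul_one]
        exact ZMod.natCast_self _
      · rw [hδ_ne j i' (fun hh => h hh.symm), smul_zero]
    have h2 : (p ^ e j : ℕ) • f (δ j) = (0 : G) := by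
      rw [← map_nsmul, hann, map_zero]
    have h3 : ((p ^ e j : ℕ) : ZMod (p ^ e i)) * f (δ j) i = 0 := by
      have := congrFun h2 i
      rw [Pi.smul_apply] at this
      rw [← nsmul_eq_mul]
      exact this
    exact stmt8_aux1 hp0 (by omega) _ h3
  -- K2: below-diagonal entries vanish mod p
  have hK2 : ∀ j i : Fin n, (j : ℕ) < i → π i (f (δ j) i) = 0 := by
    intro j i hji
    have hee := (chain i i.2 j hji).2
    have hss := (chain i i.2 j hji).1
    refine (hπ i _).mpr (dvd_trans ?_ (hK1 j i hji))
    exact dvd_trans (dvd_refl p) (by simpa using pow_dvd_pow p (by omega : 1 ≤ e i - e j))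
  -- K3: diagonal entries are 1 mod p
  have hK3 : ∀ i : Fin n, π i (f (δ i) i) = 1 := by
    intro i
    haveI := hNZ i
    haveI : NeZero (p ^ (s (i : ℕ) + 1)) := ⟨pow_ne_zero _ hp0.ne'⟩
    have hsei : s (i : ℕ) + 1 ≤ e (i : ℕ) := hse i i.2
    let ρ : ZMod (p ^ e (i : ℕ)) →+* ZMod (p ^ (s (i : ℕ) + 1)) := ZMod.castHom (pow_dvd_pow p hsei) (ZMod (p ^ (s (i : ℕ) + 1)))
    let σ : ZMod (p ^ (s (i : ℕ) + 1)) →+* ZMod p := ZMod.castHom (dvd_pow_self p (Nat.succ_ne_zero _)) (ZMod p)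
    have hπσρ : ∀ x : ZMod (p ^ e (i : ℕ)), σ (ρ x) = π i x := by
      intro x
      have h1 : ρ x = ((x.val : ℕ) : ZMod (p ^ (s (i : ℕ) + 1))) := by
        rw [ZMod.castHom_apply, ← ZMod.natCast_val]
      have h2 : π i x = ((x.val : ℕ) : ZMod p) := by
        rw [ZMod.castHom_apply, ← ZMod.natCast_val]
      rw [h1, h2, map_natCast]
    -- the global fixed-point identity
    have hfg : ∑ j : Fin n, (p ^ s (j : ℕ)) • f (δ j) =
        (fun i : Fin n => (p : ZMod (p ^ e i)) ^ s i) := by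
      rw [← hf]
      conv_rhs => rw [← hgdec]
      rw [map_sum]
      exact Finset.sum_congr rfl fun j _ => (map_nsmul f _ _).symm
    -- reduce mod p^(s i + 1)
    have hcomp : ∑ j : Fin n, ((p ^ s (j : ℕ) : ℕ) : ZMod (p ^ (s (i : ℕ) + 1))) * ρ (f (δ j) i) =
        ((p ^ s (i : ℕ) : ℕ) : ZMod (p ^ (s (i : ℕ) + 1))) := by
      have h0 := congrFun hfg i
      simp only [Finset.sum_apply, Pi.smul_apply] at h0
      have h1 := congrArg ρ h0
      rw [map_sum, map_pow, map_natCast] at h1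
      rw [Nat.cast_pow, ← h1]
      refine Finset.sum_congr rfl fun j _ => ?_
      rw [map_nsmul, nsmul_eq_mul]
    -- all off-diagonal terms vanish
    have hzero : ∀ j ∈ Finset.univ, j ≠ i →
        ((p ^ s (j : ℕ) : ℕ) : ZMod (p ^ (s (i : ℕ) + 1))) * ρ (f (δ j) i) = 0 := by
      intro j _ hj
      rcases lt_or_gt_of_ne (fun hh : (j : ℕ) = (i : ℕ) => hj (Fin.ext hh)) with h | h
      · -- j < i
        obtain ⟨c, hc⟩ := hK1 j i h
        have hch := chain i i.2 j h
        have hee : e (j : ℕ) < e (i : ℕ) := by omega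
        have hρ : ρ (f (δ j) i) = (((f (δ j) i).val : ℕ) : ZMod (p ^ (s (i : ℕ) + 1))) := by
          rw [ZMod.castHom_apply, ← ZMod.natCast_val]
        rw [hρ, ← Nat.cast_mul]
        refine (ZMod.natCast_eq_zero_iff _ _).mpr ?_
        rw [hc, ← mul_assoc, ← pow_add]
        exact Dvd.dvd.mul_right (pow_dvd_pow p (by omega)) c
      · -- j > i
        have h1 : ((p ^ s (j : ℕ) : ℕ) : ZMod (p ^ (s (i : ℕ) + 1))) = 0 := by
          refine (ZMod.natCast_eq_zero_iff _ _).mpr (pow_dvd_pow p ?_)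
          have := (chain j j.2 i h).1
          omega
        rw [h1, zero_mul]
    have hsplit : ((p ^ s (i : ℕ) : ℕ) : ZMod (p ^ (s (i : ℕ) + 1))) * ρ (f (δ i) i) = ((p ^ s (i : ℕ) : ℕ) : ZMod (p ^ (s (i : ℕ) + 1))) :=
      (Finset.sum_eq_single_of_mem i (Finset.mem_univ i) hzero).symm.trans hcomp
    have hsub : ((p ^ s (i : ℕ) : ℕ) : ZMod (p ^ (s (i : ℕ) + 1))) * (ρ (f (δ i) i) - 1) = 0 := by
      rw [mul_sub, mul_one, hsplit, sub_self]
    have hc2 : ((p ^ s (i : ℕ) * (ρ (f (δ i) i) - 1).val : ℕ) : ZMod (p ^ (s (i : ℕ) + 1))) = 0 := by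
      rw [Nat.cast_mul, ZMod.natCast_zmod_val]
      exact hsub
    have hdvd0 : p ^ (s (i : ℕ) + 1) ∣ p ^ s (i : ℕ) * (ρ (f (δ i) i) - 1).val :=
      (ZMod.natCast_eq_zero_iff _ _).mp hc2
    have hdvd : (p : ℕ) ∣ (ρ (f (δ i) i) - 1).val := by
      have h2 : p ^ s (i : ℕ) * p ∣ p ^ s (i : ℕ) * (ρ (f (δ i) i) - 1).val := by
        rw [← pow_succ]
        exact hdvd0
      exact (mul_dvd_mul_iff_left (a := p ^ s (i : ℕ)) (pow_ne_zero _ hp0.ne')).mp h2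
    have hσ : σ (ρ (f (δ i) i) - 1) = 0 :=
      (stmt8_aux2 hp0 (Nat.succ_ne_zero _) _).mpr hdvd
    rw [map_sub, map_one, sub_eq_zero] at hσ
    rw [← hπσρ]
    exact hσ
  -- the endomorphism as a ring element
  let F : AddMonoid.End G := f
  let η : AddMonoid.End G := F - 1
  have hηapp : ∀ x : G, η x = f x - x := fun x => rfl
  -- K4
  have hK4 : ∀ j i : Fin n, (j : ℕ) ≤ i → π i (η (δ j) i) = 0 := by
    intro j i hji
    rcases eq_or_lt_of_le hji with h | h
    · have : j = i := Fin.ext h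
      subst this
      rw [hηapp]
      rw [Pi.sub_apply, hδ_same, map_sub, hK3 j, map_one, sub_self]
    · rw [hηapp]
      rw [Pi.sub_apply, hδ_ne j i (by intro hh; rw [hh] at h; omega), sub_zero]
      exact hK2 j i h
  -- K5: filtration step
  have hK5 : ∀ (k : ℕ) (x : G), (∀ j : Fin n, k ≤ (j : ℕ) → π j (x j) = 0) →
      ∀ i : Fin n, k ≤ (i : ℕ) + 1 → π i (η x i) = 0 := by
    intro k x hx i hi
    have hxdec : η x = ∑ j, (x j).val • η (δ j) := by
      conv_lhs => rw [← hdec x]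
      rw [map_sum]
      exact Finset.sum_congr rfl fun j _ => map_nsmul η _ _
    rw [hxdec, Finset.sum_apply, map_sum]
    apply Finset.sum_eq_zero
    intro j _
    rw [Pi.smul_apply, map_nsmul, nsmul_eq_mul]
    rcases le_or_gt (j : ℕ) (i : ℕ) with h | h
    · rw [hK4 j i h, mul_zero]
    · have h0 : (p : ℕ) ∣ (x j).val := (hπ j _).mp (hx j (by omega))
      have h1 : (((x j).val : ℕ) : ZMod p) = 0 :=
        (ZMod.natCast_eq_zero_iff _ _).mpr h0
      rw [h1, zero_mul]
  -- K6: iterating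
  have hK6 : ∀ t k : ℕ, ∀ x : G, (∀ j : Fin n, k ≤ (j : ℕ) → π j (x j) = 0) →
      ∀ i : Fin n, k ≤ (i : ℕ) + t → π i ((η ^ t) x i) = 0 := by
    intro t
    induction t with
    | zero =>
      intro k x hx i hi
      rw [pow_zero]
      exact hx i (by omega)
    | succ t ih =>
      intro k x hx i hi
      rw [pow_succ]
      have hh : (η ^ t * η) x = (η ^ t) (η x) := rfl
      rw [hh]
      refine ih (k - 1) (η x) ?_ i (by omega)
      intro j hj
      exact hK5 k x hx j (by omega)
  have hK7 : ∀ x : G, ∀ i : Fin n, π i ((η ^ n) x i) = 0 := by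
    intro x i
    exact hK6 n n x (fun j hj => absurd j.2 (by omega)) i (by omega)
  -- K8: extraction of p
  have hK8 : ∀ y : G, (∀ i, π i (y i) = 0) → ∃ z : G, y = (p : ℕ) • z := by
    intro y hy
    refine ⟨fun i => (((y i).val / p : ℕ) : ZMod (p ^ e i)), ?_⟩
    funext i
    haveI := hNZ i
    have hd : (p : ℕ) ∣ (y i).val := (hπ i _).mp (hy i)
    rw [Pi.smul_apply, nsmul_eq_mul, ← Nat.cast_mul, Nat.mul_div_cancel' hd,
      ZMod.natCast_zmod_val]
  -- annihilator exponent
  set E : ℕ := ∑ i : Fin n, e i with hE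
  have hEc : ∀ i : Fin n, e i ≤ E :=
    fun i => Finset.single_le_sum (f := fun i : Fin n => e i)
      (fun _ _ => Nat.zero_le _) (Finset.mem_univ i)
  have hannE : ∀ x : G, (p ^ E : ℕ) • x = 0 := by
    intro x
    funext i
    rw [Pi.smul_apply, nsmul_eq_mul]
    have h0 : ((p ^ E : ℕ) : ZMod (p ^ e i)) = 0 :=
      (ZMod.natCast_eq_zero_iff _ _).mpr (pow_dvd_pow p (hEc i))
    rw [h0, zero_mul]
    rfl
  -- nilpotency
  have hnil : ∀ t : ℕ, ∀ x : G, ∃ z : G, (η ^ (n * t)) x = (p ^ t : ℕ) • z := by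
    intro t
    induction t with
    | zero => exact fun x => ⟨x, by simp⟩
    | succ t ih =>
      intro x
      obtain ⟨z, hz⟩ := ih x
      obtain ⟨w, hw⟩ := hK8 ((η ^ n) z) (hK7 z)
      refine ⟨w, ?_⟩
      have h1 : η ^ (n * (t + 1)) = η ^ n * η ^ (n * t) := by
        rw [← pow_add]; ring_nf
      have h2 : (η ^ n * η ^ (n * t)) x = (η ^ n) ((η ^ (n * t)) x) := rfl
      rw [h1, h2, hz, map_nsmul, hw, smul_smul, ← pow_succ]
  have hnilE : η ^ (n * E) = 0 := by
    refine DFunLike.ext _ _ fun x => ?_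
    obtain ⟨z, hz⟩ := hnil E x
    rw [hz, hannE z]
    rfl
  -- conclusion
  have hFunit : IsUnit F := by
    have hF : F = 1 + η := by
      show F = 1 + (F - 1)
      abel
    rw [hF]
    exact IsNilpotent.isUnit_one_add ⟨n * E, hnilE⟩
  obtain ⟨u, hu⟩ := hFunit
  refine Function.bijective_iff_has_inverse.mpr ⟨(↑u⁻¹ : AddMonoid.End G), ?_, ?_⟩
  · intro x
    have h1 : ((↑u⁻¹ * ↑u : AddMonoid.End G)) x = x := by rw [u.inv_mul]; rfl
    rw [hu] at h1
    exact h1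
  · intro x
    have h1 : ((↑u * ↑u⁻¹ : AddMonoid.End G)) x = x := by rw [u.mul_inv]; rfl
    rw [hu] at h1
    exact h1
end

section
/- Let G and H be abelian p-torsion and q-torsion groups respectively, for distinct primes p and q, and let g ∈ G, h ∈ H. If (G, g) and (H, h) are both weakly rigid, then (G ⊕ H, (g, h)) is weakly rigid. -/
lemma coprime_torsion_zero {A : Type*} [AddCommGroup A] {p q : ℕ}
    (hpq : Nat.Coprime p q) {y : A} (h1 : p • y = 0) (h2 : q • y = 0) : y = 0 := by
  obtain ⟨u, v, huv⟩ := (Nat.isCoprime_iff_coprime.mpr hpq).symm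
  have : ((u * q + v * p : ℤ)) • y = y := by rw [huv, one_smul]
  rw [add_smul, mul_smul, mul_smul] at this
  rw [← this]
  have h1' : (p : ℤ) • y = 0 := by simpa using h1
  have h2' : (q : ℤ) • y = 0 := by simpa using h2
  rw [h2', h1', smul_zero, smul_zero, add_zero]

/-- Let `G` and `H` be abelian `p`-torsion and `q`-torsion groups for distinct primes
`p ≠ q`, and `g ∈ G`, `h ∈ H`. If `(G, g)` and `(H, h)` are weakly rigid, then so is
`(G ⊕ H, (g, h))`. -/
theorem stmt9 {G H : Type*} [AddCommGroup G] [AddCommGroup H]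
    (p q : ℕ) (hp : p.Prime) (hq : q.Prime) (hpq : p ≠ q)
    (hG : ∀ x : G, ∃ n : ℕ, p ^ n • x = 0) (hH : ∀ y : H, ∃ n : ℕ, q ^ n • y = 0)
    (g : G) (h : H)
    (hwg : ∀ f : G →+ G, f g = g → Function.Bijective f)
    (hwh : ∀ f : H →+ H, f h = h → Function.Bijective f) :
    ∀ f : G × H →+ G × H, f (g, h) = (g, h) → Function.Bijective f := by
  intro f hf
  have hcop : Nat.Coprime p q := (Nat.coprime_primes hp hq).mpr hpq
  -- components
  set fG : G →+ G := (AddMonoidHom.fst G H).comp (f.comp (AddMonoidHom.inl G H)) with hfG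
  set fH : H →+ H := (AddMonoidHom.snd G H).comp (f.comp (AddMonoidHom.inr G H)) with hfH
  have keyG : ∀ x : G, f (x, 0) = (fG x, 0) := by
    intro x
    obtain ⟨n, hn⟩ := hG x
    have hsnd : (f (x, 0)).2 = 0 := by
      obtain ⟨m, hm⟩ := hH (f (x, 0)).2
      have h1 : p ^ n • (f (x, 0)).2 = 0 := by
        have : p ^ n • f (x, 0) = 0 := by
          rw [← map_nsmul, Prod.smul_mk, hn, smul_zero]
          exact map_zero f
        exact congrArg Prod.snd this
      exact coprime_torsion_zero (Nat.Coprime.pow _ _ hcop) h1 hm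
    exact Prod.ext rfl hsnd
  have keyH : ∀ y : H, f (0, y) = (0, fH y) := by
    intro y
    obtain ⟨n, hn⟩ := hH y
    have hfst : (f (0, y)).1 = 0 := by
      obtain ⟨m, hm⟩ := hG (f (0, y)).1
      have h1 : q ^ n • (f (0, y)).1 = 0 := by
        have : q ^ n • f (0, y) = 0 := by
          rw [← map_nsmul, Prod.smul_mk, hn, smul_zero]
          exact map_zero f
        exact congrArg Prod.fst this
      exact coprime_torsion_zero (Nat.Coprime.pow _ _ hcop.symm) h1 hm
    exact Prod.ext hfst rfl
  have hsplit : ∀ z : G × H, f z = (fG z.1, fH z.2) := by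
    intro ⟨x, y⟩
    have : (x, y) = ((x, 0) : G × H) + (0, y) := by simp
    rw [this, map_add, keyG, keyH]
    simp
  have hfg : fG g = g := by
    have := hsplit (g, h)
    rw [hf] at this
    exact (Prod.ext_iff.mp this.symm).1
  have hfh : fH h = h := by
    have := hsplit (g, h)
    rw [hf] at this
    exact (Prod.ext_iff.mp this.symm).2
  have bG := hwg fG hfg
  have bH := hwh fH hfh
  constructor
  · intro a b hab
    rw [hsplit a, hsplit b, Prod.ext_iff] at hab
    exact Prod.ext (bG.1 hab.1) (bH.1 hab.2)
  · intro ⟨x, y⟩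
    obtain ⟨a, ha⟩ := bG.2 x
    obtain ⟨b, hb⟩ := bH.2 y
    exact ⟨(a, b), by rw [hsplit]; simp [ha, hb]⟩
end

section
/- Let G be a countable abelian group which is semiprojective in the category of countable abelian groups: for every inductive sequence H₁ → H₂ → ⋯ of countable abelian groups with colimit H, the natural map colim Hom(G, Hₙ) → Hom(G, H) is surjective. Then G is finitely generated. -/
/-!
Enumerate `G` as `g 0, g 1, …` and let `Sₙ` be the subgroup generated by the first `n` terms. The
inclusions `S₀ ⊆ S₁ ⊆ ⋯` form an inductive sequence of countable groups with colimit `G`, so by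
semiprojectivity `id_G` factors through some `Sₙ`; then `Sₙ = G`, which is finitely generated.
-/

/-- The composite `H n →+ H (n + k)` of the structural maps of an inductive sequence. -/
def transMap {H : ℕ → Type} [∀ n, AddCommGroup (H n)] (f : ∀ n, H n →+ H (n + 1)) (n : ℕ) :
    ∀ k : ℕ, H n →+ H (n + k)
  | 0 => AddMonoidHom.id (H n)
  | k + 1 => (f (n + k)).comp (transMap f n k)

namespace AddSubgroup

variable {G : Type*} [AddGroup G]

theorem eq_top_of_subtype_comp_eq_id {S : AddSubgroup G} {ψ : G →+ S}
    (h : S.subtype.comp ψ = AddMonoidHom.id G) : S = ⊤ :=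
  eq_top_iff.2 fun x _ => by
    have hx : (ψ x : G) = x := DFunLike.congr_fun h x
    exact hx ▸ (ψ x).2

def closureImageIio (g : ℕ → G) (n : ℕ) : AddSubgroup G :=
  closure (g '' Set.Iio n)

variable (g : ℕ → G)

theorem closureImageIio_mono : Monotone (closureImageIio g) :=
  fun _ _ hmn => closure_mono (Set.image_mono (Set.Iio_subset_Iio hmn))

theorem closureImageIio_fg (n : ℕ) : (closureImageIio g n).FG :=
  ⟨((Set.finite_Iio n).image g).toFinset, by simp [closureImageIio]⟩

theorem exists_mem_closureImageIio (hg : Function.Surjective g) (x : G) :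
    ∃ n, x ∈ closureImageIio g n := by
  obtain ⟨m, rfl⟩ := hg x
  exact ⟨m + 1, subset_closure ⟨m, Nat.lt_succ_self m, rfl⟩⟩

end AddSubgroup

open AddSubgroup

/-- If a countable abelian group `G` is semiprojective in the category of countable
abelian groups (for every inductive sequence `H₁ → H₂ → ⋯` of countable abelian groups
with colimit `L`, the natural map `colim Hom(G, Hₙ) → Hom(G, L)` is surjective),
then `G` is finitely generated. The colimit `L` is characterized by: compatible maps
`ι n : Hₙ → L`, joint surjectivity, and the condition that an element vanishing in `L`
vanishes at some finite stage. -/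
theorem stmt10 {G : Type} [AddCommGroup G] [Countable G]
    (hsp : ∀ (H : ℕ → Type) [∀ n, AddCommGroup (H n)] [∀ n, Countable (H n)]
      (f : ∀ n, H n →+ H (n + 1)) (L : Type) [AddCommGroup L] [Countable L]
      (ι : ∀ n, H n →+ L),
      (∀ n, (ι (n + 1)).comp (f n) = ι n) →
      (∀ x : L, ∃ n y, ι n y = x) →
      (∀ n x, ι n x = 0 → ∃ k, transMap f n k x = 0) →
      ∀ φ : G →+ L, ∃ n, ∃ ψ : G →+ H n, (ι n).comp ψ = φ) :
    AddGroup.FG G := by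
  obtain ⟨g, hg⟩ := exists_surjective_nat G
  have exhausts (x : G) : ∃ n, ∃ y : closureImageIio g n, (closureImageIio g n).subtype y = x :=
    let ⟨n, hx⟩ := exists_mem_closureImageIio g hg x
    ⟨n, ⟨x, hx⟩, rfl⟩
  obtain ⟨n, ψ, hψ⟩ := hsp (fun n => closureImageIio g n)
    (fun n => inclusion (closureImageIio_mono g n.le_succ)) G
    (fun n => (closureImageIio g n).subtype)
    (fun _ => rfl) exhausts (fun _ _ hx => ⟨0, Subtype.ext hx⟩) (AddMonoidHom.id G)
  rw [AddGroup.fg_def, ← eq_top_of_subtype_comp_eq_id hψ]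
  exact closureImageIio_fg g n
end

section
/- Let X be a compact Hausdorff space, A a C(X)-algebra, and B ⊆ A a C(X)-subalgebra. Let a ∈ A and δ > 0. If for every x ∈ X the fiber image a(x) lies within distance δ of π_x(B), then a lies within distance δ of B. -/
/-!
The action of `C(X, ℂ)` on `A` is not assumed to commute with scalars or to be bounded; both
follow from the C⋆-structure: `f • c • v - c • f • v` is annihilated by `A`, hence zero, and
`‖f • v‖² = ‖(f̄ f) • v⋆v‖ ≤ ‖v⋆v‖` for `‖f‖ ≤ 1`, by positivity.

By approximating the error term, the hypothesis at `x` may be taken with `jₓ` killed by every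
function supported in a neighbourhood `Uₓ` of `x`. For a partition of unity `(αᵢ)` subordinate
to finitely many `Uₓᵢ`, `b = ∑ αᵢ bₓᵢ ∈ B` and `a - b = ∑ αᵢ (a - bₓᵢ + jₓᵢ)`. It remains to see
`‖∑ αᵢ dᵢ‖ ≤ maxᵢ ‖dᵢ‖`: the Jensen-type inequality `s⋆s ≤ ∑ αᵢ dᵢ⋆dᵢ` for `s = ∑ αᵢ dᵢ`,
applied `k` times, gives `‖s‖ ^ 2 ^ k ≤ (∑ ‖αᵢ‖) · M ^ 2 ^ k`, and the constant disappears
as `k → ∞`.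
-/

variable {X : Type*} [TopologicalSpace X] [CompactSpace X] [T2Space X]
variable {A : Type*} [NonUnitalCStarAlgebra A]
variable [Module C(X, ℂ) A] [IsScalarTower C(X, ℂ) A A] [SMulCommClass C(X, ℂ) A A]
variable [StarModule C(X, ℂ) A]

/-- For a closed set `S ⊆ X`, the closed two-sided ideal `C(X, S)·A` of the
`C(X)`-algebra `A`: the closure of the linear span of `{f • a : f vanishes on S}`.
For `S = {x}` the quotient of `A` by this ideal is the fiber `A(x)` and the quotient
map is `π_x`. -/
def fiberIdeal (S : Set X) (A : Type*) [NonUnitalCStarAlgebra A] [Module C(X, ℂ) A] :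
    Set A :=
  closure (Submodule.span ℂ
    {y : A | ∃ (f : C(X, ℂ)) (c : A), (∀ x ∈ S, f x = 0) ∧ y = f • c} : Set A)

open ComplexOrder Filter Topology Finset

theorem smul_comm_of_isScalarTower {R S A : Type*} [NonUnitalNormedRing A] [StarRing A]
    [CStarRing A] [SMul R A] [SMul S A] [IsScalarTower R A A] [SMulCommClass R A A]
    [IsScalarTower S A A] [SMulCommClass S A A] (r : R) (s : S) (v : A) :
    r • s • v = s • r • v := by
  have hmul : ∀ z : A, z * (r • s • v) = z * (s • r • v) := fun z =>
    calc z * (r • s • v) = (r • z) * (s • v) := by rw [mul_smul_comm, smul_mul_assoc]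
      _ = s • ((r • z) * v) := mul_smul_comm _ _ _
      _ = s • (z * (r • v)) := by rw [smul_mul_assoc, mul_smul_comm]
      _ = z * (s • r • v) := (mul_smul_comm _ _ _).symm
  rw [← sub_eq_zero, ← CStarRing.star_mul_self_eq_zero_iff, mul_sub, hmul, sub_self]

section Positivity

variable {X : Type*} [TopologicalSpace X] {A : Type*} [NonUnitalCStarAlgebra A]
  [Module C(X, ℂ) A] [IsScalarTower C(X, ℂ) A A] [SMulCommClass C(X, ℂ) A A]

theorem star_smul_mul_smul [StarModule C(X, ℂ) A] (f : C(X, ℂ)) (u : A) :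
    star (f • u) * (f • u) = (star f * f) • (star u * u) := by
  rw [star_smul, smul_mul_assoc, mul_smul_comm, mul_smul]

variable [CompactSpace X] [StarModule C(X, ℂ) A]

theorem continuousMap_smul_nonneg [PartialOrder A] [StarOrderedRing A] {f : C(X, ℂ)}
    (hf : 0 ≤ f) {p : A} (hp : 0 ≤ p) : 0 ≤ f • p := by
  obtain ⟨g, rfl⟩ := CStarAlgebra.nonneg_iff_eq_star_mul_self.mp hf
  obtain ⟨u, rfl⟩ := CStarAlgebra.nonneg_iff_eq_star_mul_self.mp hp
  rw [← star_smul_mul_smul]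
  exact star_mul_self_nonneg _

theorem norm_continuousMap_smul_le_of_nonneg [PartialOrder A] [StarOrderedRing A]
    {f : C(X, ℂ)} (hf₀ : 0 ≤ f) (hf₁ : f ≤ 1) {p : A} (hp : 0 ≤ p) : ‖f • p‖ ≤ ‖p‖ := by
  refine CStarAlgebra.norm_le_norm_of_nonneg_of_le (continuousMap_smul_nonneg hf₀ hp) ?_
  rw [← sub_nonneg, show p - f • p = (1 - f) • p by rw [sub_smul, one_smul]]
  exact continuousMap_smul_nonneg (sub_nonneg.mpr hf₁) hp

theorem norm_continuousMap_smul_le_of_norm_le_one {f : C(X, ℂ)} (hf : ‖f‖ ≤ 1) (v : A) :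
    ‖f • v‖ ≤ ‖v‖ := by
  let := CStarAlgebra.spectralOrder A
  have := CStarAlgebra.spectralOrderedRing A
  have hff : star f * f ≤ 1 := by
    rw [← CStarAlgebra.norm_le_one_iff_of_nonneg _ (star_mul_self_nonneg f),
      CStarRing.norm_star_mul_self]
    exact mul_le_one₀ hf (norm_nonneg f) hf
  have := norm_continuousMap_smul_le_of_nonneg (star_mul_self_nonneg f) hff
    (star_mul_self_nonneg v)
  rwa [← star_smul_mul_smul, CStarRing.norm_star_mul_self, CStarRing.norm_star_mul_self,
    ← mul_self_le_mul_self_iff (norm_nonneg _) (norm_nonneg _)] at this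

theorem norm_continuousMap_smul_le (f : C(X, ℂ)) (v : A) : ‖f • v‖ ≤ ‖f‖ * ‖v‖ := by
  rcases eq_or_ne v 0 with rfl | hv
  · simp
  have hv' : 0 < ‖v‖ := norm_pos_iff.mpr hv
  rw [← div_le_iff₀ hv']
  refine le_of_forall_lt_rat_imp_le fun q hq => ?_
  have hq₀ : (0 : ℝ) < q := (norm_nonneg f).trans_lt hq
  -- additivity of `g ↦ g • v` makes it `ℚ`-linear
  have hsmul : f • v = (q : ℂ) • (((q : ℂ)⁻¹ • f) • v) := by
    have := map_ratCast_smul ((smulAddHom C(X, ℂ) A).flip v) ℂ ℂ q ((q : ℂ)⁻¹ • f)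
    simp only [AddMonoidHom.flip_apply, smulAddHom_apply] at this
    rw [← this, smul_smul, mul_inv_cancel₀ (by exact_mod_cast hq₀.ne'), one_smul]
  have hnorm : ‖(q : ℂ)⁻¹ • f‖ ≤ 1 := by
    rw [norm_smul, norm_inv, Complex.norm_ratCast, abs_of_pos hq₀, inv_mul_le_one₀ hq₀]
    exact hq.le
  rw [div_le_iff₀ hv', hsmul, norm_smul, Complex.norm_ratCast, abs_of_pos hq₀]
  exact mul_le_mul_of_nonneg_left (norm_continuousMap_smul_le_of_norm_le_one hnorm v) hq₀.le

end Positivity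

theorem le_of_forall_pow_two_pow_le_mul {x y C : ℝ} (hy : 0 ≤ y)
    (h : ∀ k : ℕ, x ^ 2 ^ k ≤ C * y ^ 2 ^ k) : x ≤ y := by
  by_contra! hyx
  have hx : 0 < x := hy.trans_lt hyx
  have hlim : Tendsto (fun k : ℕ => C * (y / x) ^ 2 ^ k) atTop (𝓝 0) := by
    simpa using ((tendsto_pow_atTop_nhds_zero_of_lt_one (div_nonneg hy hx.le)
      ((div_lt_one hx).mpr hyx)).comp (tendsto_pow_atTop_atTop_of_one_lt one_lt_two)).const_mul C
  obtain ⟨k, hk⟩ := (hlim.eventually (gt_mem_nhds one_pos)).exists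
  have := h k
  rw [div_pow, mul_div_assoc', div_lt_one (pow_pos hx _)] at hk
  linarith

section PartitionBound

variable {X : Type*} [TopologicalSpace X] {A : Type*} [NonUnitalCStarAlgebra A]
  [Module C(X, ℂ) A] [IsScalarTower C(X, ℂ) A A] [SMulCommClass C(X, ℂ) A A]
  [StarModule C(X, ℂ) A] {ι : Type*} [Fintype ι]

theorem sum_smul_star_mul_self_eq {α : ι → C(X, ℂ)} (hα : ∀ i, IsSelfAdjoint (α i))
    (d : ι → A) :
    ∑ i, α i • (star (d i) * d i) = star (∑ i, α i • d i) * (∑ i, α i • d i) +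
      (∑ i, α i • (star (d i - ∑ j, α j • d j) * (d i - ∑ j, α j • d j)) +
        (1 - ∑ i, α i) • (star (∑ i, α i • d i) * (∑ i, α i • d i))) := by
  set s := ∑ i, α i • d i
  have hstar : star s = ∑ i, α i • star (d i) := by
    simp only [s, star_sum, star_smul, (hα _).star_eq]
  have hleft : ∑ i, α i • (star (d i) * s) = star s * s := by
    simp only [← smul_mul_assoc, ← sum_mul, hstar]
  have hright : ∑ i, α i • (star s * d i) = star s * s := by
    simp only [← mul_smul_comm, ← mul_sum, s]
  have hexpand : ∀ i, star (d i - s) * (d i - s) =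
      star (d i) * d i - star (d i) * s - star s * d i + star s * s := fun i => by
    rw [star_sub]; noncomm_ring
  simp only [hexpand, smul_add, smul_sub, sum_add_distrib, sum_sub_distrib, hleft, hright,
    ← sum_smul, sub_smul, one_smul]
  abel

variable [CompactSpace X]

theorem star_sum_smul_mul_sum_smul_le [PartialOrder A] [StarOrderedRing A] {α : ι → C(X, ℂ)}
    (hα : ∀ i, 0 ≤ α i) (hsum : ∑ i, α i ≤ 1) (d : ι → A) :
    star (∑ i, α i • d i) * (∑ i, α i • d i) ≤ ∑ i, α i • (star (d i) * d i) := by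
  rw [sum_smul_star_mul_self_eq (fun i => (hα i).isSelfAdjoint)]
  refine le_add_of_nonneg_right (add_nonneg (sum_nonneg fun i _ => ?_) ?_)
  · exact continuousMap_smul_nonneg (hα i) (star_mul_self_nonneg _)
  · exact continuousMap_smul_nonneg (sub_nonneg.mpr hsum) (star_mul_self_nonneg _)

theorem norm_sum_smul_sq_le {α : ι → C(X, ℂ)} (hα : ∀ i, 0 ≤ α i) (hsum : ∑ i, α i ≤ 1)
    (d : ι → A) : ‖∑ i, α i • d i‖ ^ 2 ≤ ‖∑ i, α i • (star (d i) * d i)‖ := by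
  let := CStarAlgebra.spectralOrder A
  have := CStarAlgebra.spectralOrderedRing A
  rw [sq, ← CStarRing.norm_star_mul_self]
  exact CStarAlgebra.norm_le_norm_of_nonneg_of_le (star_mul_self_nonneg _)
    (star_sum_smul_mul_sum_smul_le hα hsum d)

theorem norm_sum_smul_pow_two_pow_le {α : ι → C(X, ℂ)} (hα : ∀ i, 0 ≤ α i)
    (hsum : ∑ i, α i ≤ 1) (k : ℕ) (d : ι → A) (M : ℝ) (hd : ∀ i, ‖d i‖ ≤ M) :
    ‖∑ i, α i • d i‖ ^ 2 ^ k ≤ (∑ i, ‖α i‖) * M ^ 2 ^ k := by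
  induction k generalizing d M with
  | zero =>
    calc ‖∑ i, α i • d i‖ ^ 2 ^ 0 ≤ ∑ i, ‖α i‖ * ‖d i‖ := by
          rw [pow_zero, pow_one]
          exact (norm_sum_le _ _).trans (sum_le_sum fun i _ => norm_continuousMap_smul_le _ _)
      _ ≤ ∑ i, ‖α i‖ * M := sum_le_sum fun i _ => by gcongr; exact hd i
      _ = (∑ i, ‖α i‖) * M ^ 2 ^ 0 := by rw [sum_mul, pow_zero, pow_one]
  | succ k ih =>
    have hd' : ∀ i, ‖star (d i) * d i‖ ≤ M ^ 2 := fun i => by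
      rw [CStarRing.norm_star_mul_self, sq]
      exact mul_self_le_mul_self (norm_nonneg _) (hd i)
    calc ‖∑ i, α i • d i‖ ^ 2 ^ (k + 1) = (‖∑ i, α i • d i‖ ^ 2) ^ 2 ^ k := by
          rw [pow_succ', pow_mul]
      _ ≤ ‖∑ i, α i • (star (d i) * d i)‖ ^ 2 ^ k := by
          gcongr; exact norm_sum_smul_sq_le hα hsum d
      _ ≤ (∑ i, ‖α i‖) * (M ^ 2) ^ 2 ^ k := ih _ _ hd'
      _ = (∑ i, ‖α i‖) * M ^ 2 ^ (k + 1) := by rw [← pow_mul, ← pow_succ']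

theorem norm_sum_smul_le {α : ι → C(X, ℂ)} (hα : ∀ i, 0 ≤ α i) (hsum : ∑ i, α i ≤ 1)
    {d : ι → A} {M : ℝ} (hM : 0 ≤ M) (hd : ∀ i, ‖d i‖ ≤ M) : ‖∑ i, α i • d i‖ ≤ M :=
  le_of_forall_pow_two_pow_le_mul hM fun k => norm_sum_smul_pow_two_pow_le hα hsum k d M hd

theorem norm_sum_smul_lt {α : ι → C(X, ℂ)} (hα : ∀ i, 0 ≤ α i) (hsum : ∑ i, α i ≤ 1)
    {d : ι → A} {δ : ℝ} (hδ : 0 < δ) (hd : ∀ i, ‖d i‖ < δ) : ‖∑ i, α i • d i‖ < δ := by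
  lift δ to NNReal using hδ.le
  have hsup : univ.sup (fun i => ‖d i‖₊) < δ :=
    (Finset.sup_lt_iff (by exact_mod_cast hδ)).mpr fun i _ => by exact_mod_cast hd i
  exact (norm_sum_smul_le hα hsum (NNReal.coe_nonneg _)
    fun i => NNReal.coe_le_coe.mpr (le_sup (f := fun i => ‖d i‖₊) (mem_univ i))).trans_lt
    (by exact_mod_cast hsup)

end PartitionBound

section Localization

variable {X : Type*} [TopologicalSpace X] [CompactSpace X] [T2Space X]

theorem exists_eventuallyEq_zero_norm_sub_le {f : C(X, ℂ)} {x : X} (hf : f x = 0) {ε : ℝ}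
    (hε : 0 < ε) : ∃ g : C(X, ℂ), g =ᶠ[𝓝 x] 0 ∧ ‖f - g‖ ≤ ε := by
  set W : Set X := {z | ‖f z‖ < ε}
  have hW : IsOpen W := isOpen_lt (by fun_prop) continuous_const
  obtain ⟨V, hVx, hVc, hVW⟩ := exists_mem_nhds_isClosed_subset
    (hW.mem_nhds (show x ∈ W by simp [W, hf, hε]))
  obtain ⟨χ, hχ₀, hχ₁, hχ⟩ := exists_continuous_zero_one_of_isClosed hW.isClosed_compl hVc
    (Set.disjoint_compl_left_iff_subset.mpr hVW)
  let χc : C(X, ℂ) := ⟨fun z => (χ z : ℂ), by fun_prop⟩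
  refine ⟨(1 - χc) * f, Filter.mem_of_superset hVx fun z hz => by simp [χc, hχ₁ hz], ?_⟩
  refine (ContinuousMap.norm_le _ hε.le).mpr fun z => ?_
  have hχz : ‖f z - (1 - χ z) * f z‖ = χ z * ‖f z‖ := by
    rw [show f z - (1 - (χ z : ℂ)) * f z = χ z * f z by ring, norm_mul, Complex.norm_real,
      Real.norm_of_nonneg (hχ z).1]
  simp only [ContinuousMap.sub_apply, ContinuousMap.mul_apply, ContinuousMap.one_apply, χc,
    ContinuousMap.coe_mk]
  rw [hχz]
  by_cases hz : z ∈ W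
  · exact (mul_le_of_le_one_left (norm_nonneg _) (hχ z).2).trans (le_of_lt hz)
  · simp [hχ₀ (show z ∈ Wᶜ from hz), hε.le]

theorem exists_sum_eq_one_tsupport_subset {ι : Type*} [Fintype ι] {U : ι → Set X}
    (hU : ∀ i, IsOpen (U i)) (hcover : ⋃ i, U i = Set.univ) :
    ∃ α : ι → C(X, ℂ), (∀ i, 0 ≤ α i) ∧ ∑ i, α i = 1 ∧ ∀ i, tsupport (α i) ⊆ U i := by
  obtain ⟨ρ, hρ⟩ := PartitionOfUnity.exists_isSubordinate isClosed_univ U hU hcover.ge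
  refine ⟨fun i => ⟨fun z => (ρ i z : ℂ), by fun_prop⟩, fun i z => ?_, ?_, fun i => ?_⟩
  · simpa using ρ.nonneg i z
  · ext z
    simpa [finsum_eq_sum_of_fintype] using congrArg ((↑) : ℝ → ℂ) (ρ.sum_eq_one (Set.mem_univ z))
  · exact (tsupport_comp_subset Complex.ofReal_zero (ρ i)).trans (hρ i)

end Localization

section LocallyNull

variable {X : Type*} [TopologicalSpace X] {A : Type*} [NonUnitalCStarAlgebra A]
  [Module C(X, ℂ) A] [IsScalarTower C(X, ℂ) A A] [SMulCommClass C(X, ℂ) A A]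

variable (A) in
def locallyNull (x : X) : Submodule ℂ A where
  carrier := {j | ∃ U ∈ 𝓝 x, ∀ α : C(X, ℂ), tsupport α ⊆ U → α • j = 0}
  add_mem' := by
    rintro j k ⟨U, hU, hj⟩ ⟨V, hV, hk⟩
    refine ⟨U ∩ V, inter_mem hU hV, fun α hα => ?_⟩
    rw [smul_add, hj α (hα.trans Set.inter_subset_left), hk α (hα.trans Set.inter_subset_right),
      add_zero]
  zero_mem' := ⟨Set.univ, univ_mem, fun α _ => smul_zero α⟩
  smul_mem' := by
    rintro c j ⟨U, hU, hj⟩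
    exact ⟨U, hU, fun α hα => by rw [smul_comm_of_isScalarTower, hj α hα, smul_zero]⟩

theorem smul_mem_locallyNull {g : C(X, ℂ)} {x : X} (hg : g =ᶠ[𝓝 x] 0) (c : A) :
    g • c ∈ locallyNull A x := by
  refine ⟨{z | g z = 0}, hg, fun α hα => ?_⟩
  have hαg : α * g = 0 := by
    ext z
    by_cases hz : α z = 0
    · simp [hz]
    · simpa using Or.inr (hα (subset_tsupport α hz))
  rw [← mul_smul, hαg]
  exact zero_smul C(X, ℂ) c

theorem fiberIdeal_singleton_subset_closure_locallyNull [CompactSpace X] [T2Space X]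
    [StarModule C(X, ℂ) A] (x : X) : fiberIdeal ({x} : Set X) A ⊆ closure (locallyNull A x) := by
  refine closure_minimal
    ((Submodule.span_le (p := (locallyNull A x).topologicalClosure)).mpr ?_) isClosed_closure
  rintro _ ⟨f, c, hf, rfl⟩
  refine Metric.mem_closure_iff.mpr fun ε hε => ?_
  have hε' : 0 < ε / (‖c‖ + 1) := by positivity
  obtain ⟨g, hg, hfg⟩ := exists_eventuallyEq_zero_norm_sub_le (hf x rfl) hε'
  refine ⟨g • c, smul_mem_locallyNull hg c, ?_⟩
  rw [dist_eq_norm, ← sub_smul]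
  calc ‖(f - g) • c‖ ≤ ‖f - g‖ * ‖c‖ := norm_continuousMap_smul_le _ _
    _ ≤ ε / (‖c‖ + 1) * ‖c‖ := by gcongr
    _ < ε := by
      rw [div_mul_eq_mul_div, div_lt_iff₀ (by positivity)]
      nlinarith [norm_nonneg c]

end LocallyNull

theorem stmt13_general (B : NonUnitalStarSubalgebra ℂ A)
    (hBmod : ∀ (f : C(X, ℂ)) (b : A), b ∈ B → f • b ∈ B)
    (a : A) (δ : ℝ) (hδ : 0 < δ)
    (h : ∀ x : X, ∃ b ∈ B, ∃ j ∈ fiberIdeal ({x} : Set X) A, ‖a - b + j‖ < δ) :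
    ∃ b ∈ B, ‖a - b‖ < δ := by
  have hloc : ∀ x : X, ∃ b ∈ B, ∃ j ∈ locallyNull A x, ‖a - b + j‖ < δ := fun x => by
    obtain ⟨b, hb, j, hj, hlt⟩ := h x
    obtain ⟨j', hj', hlt'⟩ := mem_closure_iff.mp
      (fiberIdeal_singleton_subset_closure_locallyNull x hj) {k | ‖a - b + k‖ < δ}
      (isOpen_lt (by fun_prop) continuous_const) hlt
    exact ⟨b, hb, j', hlt', hj'⟩
  choose b hbB j hj hlt using hloc
  choose U hU hUj using hj
  obtain ⟨t, ht⟩ := isCompact_univ.elim_finite_subcover (fun x => interior (U x))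
    (fun _ => isOpen_interior) fun x _ =>
      Set.mem_iUnion.mpr ⟨x, mem_interior_iff_mem_nhds.mpr (hU x)⟩
  obtain ⟨α, hα₀, hα₁, hαU⟩ := exists_sum_eq_one_tsupport_subset (U := fun i : t => interior (U i))
    (fun _ => isOpen_interior) (by simpa [Set.eq_univ_iff_forall] using ht)
  have hkill : ∀ i : t, α i • j i = 0 := fun i => hUj i (α i) ((hαU i).trans interior_subset)
  refine ⟨∑ i, α i • b i, sum_mem fun i _ => hBmod _ _ (hbB i), ?_⟩
  calc ‖a - ∑ i, α i • b i‖ = ‖∑ i, α i • (a - b i + j i)‖ := by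
        simp only [smul_add, smul_sub, hkill, sum_sub_distrib, ← sum_smul, hα₁,
          one_smul, add_zero]
    _ < δ := norm_sum_smul_lt hα₀ hα₁.le hδ fun i => hlt i

/-- Let `X` be compact Hausdorff, `A` a `C(X)`-algebra and `B ⊆ A` a `C(X)`-subalgebra.
Let `a ∈ A` and `δ > 0`. If for every `x ∈ X` the fiber image `a(x)` lies within
distance `δ` of `π_x(B)` (expressed via the quotient norm: there are `b ∈ B` and `j` in
the ideal `C(X, x)·A` with `‖a − b + j‖ < δ`), then `a` lies within distance `δ` of `B`. -/
theorem stmt13 (B : NonUnitalStarSubalgebra ℂ A) (hBclosed : IsClosed (B : Set A))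
    (hBmod : ∀ (f : C(X, ℂ)) (b : A), b ∈ B → f • b ∈ B)
    (a : A) (δ : ℝ) (hδ : 0 < δ)
    (h : ∀ x : X, ∃ b ∈ B, ∃ j ∈ fiberIdeal ({x} : Set X) A, ‖a - b + j‖ < δ) :
    ∃ b ∈ B, ‖a - b‖ < δ :=
  stmt13_general B hBmod a δ hδ h
end

section
/- Let G be an abelian group and g ∈ G such that G ≅ ℤ ⊕ H for some abelian group H, and write g = (a, h) with respect to this decomposition. If H = ℤ, then (G, g) is not weakly rigid; consequently a weakly rigid pointed finitely generated abelian group has free rank at most 1. -/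
/-- Key lemma: if there is `ℓ : M →+ ℤ` vanishing at `v` and an element `w` with `1 ≤ ℓ w`,
then there is a non-surjective endomorphism of `M` fixing `v`. -/
theorem key_nonrigid {M : Type*} [AddCommGroup M] (l : M →+ ℤ) (w v : M)
    (hv : l v = 0) (hw : 1 ≤ l w) :
    ∃ f : M →+ M, f v = v ∧ ¬ Function.Surjective f := by
  refine ⟨{ toFun := fun x => x + l x • w,
            map_zero' := by simp,
            map_add' := fun x y => by simp only [map_add, add_smul]; abel }, by simp [hv], ?_⟩
  intro hs
  obtain ⟨u, hu⟩ := hs w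
  have h2 : l u + l u * l w = l w := by
    have := congrArg l hu
    simpa [smul_eq_mul] using this
  rcases le_or_gt (l u) 0 with h | h
  · nlinarith
  · nlinarith

/-- Rank of a product with a torsion group. -/
theorem rank_prod_torsion_le {M T : Type} [AddCommGroup M] [AddCommGroup T]
    (hT : ∀ t : T, ∃ c : ℤ, c ≠ 0 ∧ c • t = 0) :
    Module.rank ℤ (M × T) ≤ Module.rank ℤ M := by
  rw [Module.rank_def]
  apply ciSup_le'
  rintro ⟨s, li⟩
  have hli : LinearIndependent ℤ (fun x : s => (x : M × T).1) := by
    replace li : LinearIndependent ℤ ((↑) : s → M × T) := li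
    rw [linearIndependent_iff] at li ⊢
    intro c hc
    set u := Finsupp.linearCombination ℤ ((↑) : s → M × T) c with hu
    obtain ⟨a, ha, hat⟩ := hT u.2
    have h1 : u.1 = 0 := by
      have h := Finsupp.apply_linearCombination ℤ (LinearMap.fst ℤ M T) ((↑) : s → M × T) c
      rw [show ((LinearMap.fst ℤ M T) ∘ ((↑) : s → M × T)) = (fun x : s => (x : M × T).1) from rfl,
        hc] at h
      simpa [hu] using h
    have h0 : Finsupp.linearCombination ℤ ((↑) : s → M × T) (a • c) = 0 := by
      rw [map_smul, ← hu]
      ext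
      · simp [h1]
      · simpa using hat
    have := li _ h0
    ext i
    have hi := congrFun (congrArg (fun f : s →₀ ℤ => (f : s → ℤ)) this) i
    simp only [Finsupp.smul_apply, smul_eq_mul, Finsupp.coe_zero, Pi.zero_apply] at hi
    rcases mul_eq_zero.mp hi with h | h
    · exact absurd h ha
    · simpa using h
  exact hli.cardinal_le_rank

/-- If an abelian group `G` is isomorphic to `ℤ ⊕ ℤ`, then `(G, g)` is not weakly rigid
for any `g ∈ G`; consequently a weakly rigid pointed finitely generated abelian group
has free rank at most `1`. -/
theorem stmt18 {G : Type*} [AddCommGroup G] (g : G) :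
    (∀ _ : G ≃+ ℤ × ℤ, ¬ ∀ f : G →+ G, f g = g → Function.Bijective f) ∧
      (AddGroup.FG G → (∀ f : G →+ G, f g = g → Function.Bijective f) →
        Module.rank ℤ G ≤ 1) := by
  constructor
  · intro e hwr
    obtain ⟨l, w, hv, hw⟩ : ∃ (l : G →+ ℤ) (w : G), l g = 0 ∧ 1 ≤ l w := by
      by_cases h : (e g).1 = 0 ∧ (e g).2 = 0
      · refine ⟨(AddMonoidHom.fst ℤ ℤ).comp e.toAddMonoidHom, e.symm (1, 0), by simp [h.1], by simp⟩
      · set a := (e g).1 with hA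
        set b := (e g).2 with hB
        refine ⟨{ toFun := fun x => b * (e x).1 - a * (e x).2,
                  map_zero' := by simp,
                  map_add' := fun x y => by simp only [map_add, Prod.fst_add, Prod.snd_add]; ring },
          e.symm (b, -a), by simp [← hA, ← hB]; ring, ?_⟩
        simp only [AddMonoidHom.coe_mk, ZeroHom.coe_mk, AddEquiv.apply_symm_apply]
        have hab : a ≠ 0 ∨ b ≠ 0 := by
          by_contra hc
          push_neg at hc
          exact h ⟨hc.1, hc.2⟩
        rcases hab with ha | hb
        · have h1 : 0 < a * a := mul_self_pos.2 ha
          nlinarith [mul_self_nonneg b]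
        · have h1 : 0 < b * b := mul_self_pos.2 hb
          nlinarith [mul_self_nonneg a]
    obtain ⟨f, hf, hns⟩ := key_nonrigid l w g hv hw
    exact hns (hwr f hf).2
  · intro _ hwr
    obtain ⟨n, ι, fι, p, hp, ee, ⟨e⟩⟩ := AddCommGroup.equiv_free_prod_directSum_zmod G
    have hn : n ≤ 1 := by
      by_contra hn
      push_neg at hn
      have h0 : 0 < n := by omega
      have h1 : 1 < n := by omega
      set i0 : Fin n := ⟨0, h0⟩ with hi0
      set i1 : Fin n := ⟨1, h1⟩ with hi1
      have hne : i0 ≠ i1 := by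
        simp [hi0, hi1, Fin.ext_iff]
      set a := (e g).1 i0 with hA
      set b := (e g).1 i1 with hB
      obtain ⟨l, w, hv, hw⟩ : ∃ (l : G →+ ℤ) (w : G), l g = 0 ∧ 1 ≤ l w := by
        by_cases h : a = 0 ∧ b = 0
        · refine ⟨{ toFun := fun x => (e x).1 i0,
                    map_zero' := by simp,
                    map_add' := fun x y => by simp },
            e.symm (Finsupp.single i0 1, 0), by simpa [← hA] using h.1, by simp⟩
        · refine ⟨{ toFun := fun x => b * (e x).1 i0 - a * (e x).1 i1,
                    map_zero' := by simp,
                    map_add' := fun x y => by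
                      simp only [map_add, Prod.fst_add, Finsupp.add_apply]; ring },
            e.symm (Finsupp.single i0 b - Finsupp.single i1 a, 0), by simp [← hA, ← hB]; ring, ?_⟩
          simp only [AddMonoidHom.coe_mk, ZeroHom.coe_mk, AddEquiv.apply_symm_apply]
          rw [Finsupp.sub_apply, Finsupp.sub_apply, Finsupp.single_eq_same,
            Finsupp.single_eq_of_ne (Ne.symm hne), Finsupp.single_eq_of_ne hne,
            Finsupp.single_eq_same]
          have hab : a ≠ 0 ∨ b ≠ 0 := by
            by_contra hc
            push_neg at hc
            exact h ⟨hc.1, hc.2⟩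
          rcases hab with ha | hb
          · have hh : 0 < a * a := mul_self_pos.2 ha
            nlinarith [mul_self_nonneg b]
          · have hh : 0 < b * b := mul_self_pos.2 hb
            nlinarith [mul_self_nonneg a]
      obtain ⟨f, hf, hns⟩ := key_nonrigid l w g hv hw
      exact hns (hwr f hf).2
    haveI : ∀ i, NeZero (p i ^ ee i) := fun i => ⟨pow_ne_zero _ (hp i).pos.ne'⟩
    haveI : Finite (DirectSum ι fun i => ZMod (p i ^ ee i)) :=
      Finite.of_equiv _ DFinsupp.equivFunOnFintype.symm
    have hT : ∀ t : DirectSum ι fun i => ZMod (p i ^ ee i), ∃ c : ℤ, c ≠ 0 ∧ c • t = 0 := by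
      intro t
      refine ⟨(addOrderOf t : ℤ), ?_, ?_⟩
      · exact_mod_cast (addOrderOf_pos t).ne'
      · rw [natCast_zsmul]
        exact addOrderOf_nsmul_eq_zero t
    have h2 : Module.rank ℤ ((Fin n →₀ ℤ) × DirectSum ι fun i => ZMod (p i ^ ee i)) ≤
        Module.rank ℤ (Fin n →₀ ℤ) := rank_prod_torsion_le hT
    have h3 : Module.rank ℤ (Fin n →₀ ℤ) = n := by
      rw [rank_finsupp_self']
      simp
    have h5 : Module.rank ℤ ((Fin n →₀ ℤ) × DirectSum ι fun i => ZMod (p i ^ ee i)) ≤ 1 := by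
      refine le_trans h2 ?_
      rw [h3]
      exact_mod_cast hn
    have h4 := e.toIntLinearEquiv.lift_rank_eq
    refine Cardinal.lift_le.{0}.mp ?_
    rw [h4]
    refine (Cardinal.lift_le.mpr h5).trans_eq ?_
    rw [Cardinal.lift_one, Cardinal.lift_one]
end
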